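/- For every nonnegative integer n, the function $E_n(x) := \sum_{j=0}^{n}\frac{e^{2jx}(x+H_{n-j}-H_j)}{j!^2(n-j)!^2}$ vanishes to order at least $2n+1$ at $x=0$, i.e., $E_n(x) = O(x^{2n+1})$ as $x\to 0$; equivalently, the first $2n+1$ Taylor coefficients of $E_n$ at 0 vanish. -/

import Mathlib

open Finset Asymptotics

/-- The `n`-th harmonic number `H_n = ∑_{j=1}^n 1/j`, with `H_0 = 0`. -/
noncomputable def H (n : ℕ) : ℝ := ∑ i ∈ Finset.range n, (1 : ℝ) / (i + 1)

/-- `E_n(x) = ∑_{j=0}^{n} e^{2jx}(x + H_{n-j} - H_j)/(j!² (n-j)!²)`. -/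
noncomputable def E (n : ℕ) (x : ℝ) : ℝ :=
  ∑ j ∈ Finset.range (n + 1),
    Real.exp (2 * j * x) * (x + H (n - j) - H j) / ((j.factorial : ℝ) ^ 2 * ((n - j).factorial : ℝ) ^ 2)

/-!
Let `θ_c = X d/dX + c` act on power series over the dual numbers `ℝ[ε]`. For solutions of
`θ_c² A = X A` and `θ_{-c}² B = X B`, the Wronskian `θ_c A · B - A · θ_{-c} B` is killed by
`θ_0`, hence constant, while `θ_c^m A = P_m A + Q_m θ_c A` with `Q_m` of degree `< m / 2` and
`P_m, Q_m` independent of `c`. So `[X^n] (θ_c^m A · B)` is symmetric under `(c, A) ↔ (-c, B)`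
when `m ≤ 2n`.

Take `A = A_1`, `B = A_{-1}` with `A_s = Σ_j X^j (1 - 2 s H_j ε) / j!²`, the first-order jet in
`ε` of `Σ_j X^j / Γ(j + 1 + s ε)²` up to a constant factor, which solves `θ_{sε}² A_s = X A_s`.
By the symmetry, `[X^n] (θ_{sε}^m A_s · A_{-s})` takes the same value at `s = 1` and `s = -1`,
while its `ε`-part is odd in `s`. So that `ε`-part, which up to a factor is the `m`-th Taylor
coefficient of `E_n` at `0`, vanishes.
-/

open PowerSeries

section EulerOperator

variable {R : Type*} [CommRing R]

noncomputable def eulerOp (c : R) : R⟦X⟧ →ₗ[R] R⟦X⟧ where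
  toFun f := mk fun j => (j + c) * coeff j f
  map_add' f g := by ext; simp [mul_add]
  map_smul' r f := by ext; simp only [map_smul, smul_eq_mul, coeff_mk, RingHom.id_apply]; ring

@[simp] lemma coeff_eulerOp (c : R) (f : R⟦X⟧) (j : ℕ) :
    coeff j (eulerOp c f) = (j + c) * coeff j f := by
  simp [eulerOp]

lemma coeff_eulerOp_iterate (c : R) (f : R⟦X⟧) (m j : ℕ) :
    coeff j ((eulerOp c)^[m] f) = (j + c) ^ m * coeff j f := by
  induction m with
  | zero => simp
  | succ m ih => rw [Function.iterate_succ_apply', coeff_eulerOp, ih, ← mul_assoc, ← pow_succ']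

lemma eulerOp_mul (b c : R) (f g : R⟦X⟧) :
    eulerOp (b + c) (f * g) = eulerOp b f * g + f * eulerOp c g := by
  ext j
  simp only [coeff_eulerOp, coeff_mul, map_add, mul_sum, ← sum_add_distrib]
  refine sum_congr rfl fun p hp => ?_
  rw [← mem_antidiagonal.mp hp]
  push_cast
  ring

variable (R) in
noncomputable def eulerPair : ℕ → R⟦X⟧ × R⟦X⟧
  | 0 => (1, 0)
  | m + 1 => (eulerOp 0 (eulerPair m).1 + X * (eulerPair m).2,
      (eulerPair m).1 + eulerOp 0 (eulerPair m).2)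

lemma eulerOp_iterate_eq {c : R} {A : R⟦X⟧} (hA : eulerOp c (eulerOp c A) = X * A) (m : ℕ) :
    (eulerOp c)^[m] A = (eulerPair R m).1 * A + (eulerPair R m).2 * eulerOp c A := by
  have leibniz (f g : R⟦X⟧) : eulerOp c (f * g) = eulerOp 0 f * g + f * eulerOp c g := by
    simpa using eulerOp_mul 0 c f g
  induction m with
  | zero => simp [eulerPair]
  | succ m ih =>
    rw [Function.iterate_succ_apply', ih, map_add, leibniz, leibniz, hA, eulerPair]
    ring

lemma coeff_eulerPair_eq_zero (m k : ℕ) :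
    (m < 2 * k → coeff k (eulerPair R m).1 = 0) ∧
      (m ≤ 2 * k → coeff k (eulerPair R m).2 = 0) := by
  induction m generalizing k with
  | zero =>
    refine ⟨fun hk => ?_, fun _ => by simp [eulerPair]⟩
    simp [eulerPair, coeff_one, show k ≠ 0 by omega]
  | succ m ih =>
    refine ⟨fun hk => ?_, fun hk => ?_⟩
    · obtain ⟨k, rfl⟩ : ∃ k', k = k' + 1 := Nat.exists_eq_succ_of_ne_zero (by omega)
      simp [eulerPair, coeff_succ_X_mul, (ih (k + 1)).1 (by omega), (ih k).2 (by omega)]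
    · simp [eulerPair, (ih k).1 (by omega), (ih k).2 (by omega)]

lemma eulerOp_zero_wronskian_eq_zero {c : R} {A B : R⟦X⟧} (hA : eulerOp c (eulerOp c A) = X * A)
    (hB : eulerOp (-c) (eulerOp (-c) B) = X * B) :
    eulerOp 0 (eulerOp c A * B - A * eulerOp (-c) B) = 0 := by
  have leibniz (f g : R⟦X⟧) : eulerOp 0 (f * g) = eulerOp c f * g + f * eulerOp (-c) g := by
    simpa using eulerOp_mul c (-c) f g
  rw [map_sub, leibniz, leibniz, hA, hB]
  ring

lemma coeff_eq_zero_of_eulerOp_zero_eq_zero [IsAddTorsionFree R] {f : R⟦X⟧}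
    (hf : eulerOp 0 f = 0) {k : ℕ} (hk : k ≠ 0) : coeff k f = 0 := by
  have := congrArg (coeff k) hf
  rw [coeff_eulerOp, add_zero, map_zero, ← nsmul_eq_mul, ← nsmul_zero k] at this
  exact IsAddTorsionFree.nsmul_right_injective hk this

theorem coeff_eulerOp_iterate_mul_comm [IsAddTorsionFree R] {c : R} {A B : R⟦X⟧}
    (hA : eulerOp c (eulerOp c A) = X * A) (hB : eulerOp (-c) (eulerOp (-c) B) = X * B)
    {m n : ℕ} (hm : m ≤ 2 * n) :
    coeff n ((eulerOp c)^[m] A * B) = coeff n ((eulerOp (-c))^[m] B * A) := by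
  set W := eulerOp c A * B - A * eulerOp (-c) B
  have hdiff : (eulerOp c)^[m] A * B - (eulerOp (-c))^[m] B * A = (eulerPair R m).2 * W := by
    rw [eulerOp_iterate_eq hA, eulerOp_iterate_eq hB]
    ring
  have hW : ∀ q ≠ 0, coeff q W = 0 := fun q hq =>
    coeff_eq_zero_of_eulerOp_zero_eq_zero (eulerOp_zero_wronskian_eq_zero hA hB) hq
  rw [← sub_eq_zero, ← map_sub, hdiff, coeff_mul]
  refine sum_eq_zero fun p hp => ?_
  rcases eq_or_ne p.2 0 with h | h
  · rw [(coeff_eulerPair_eq_zero m p.1).2 (by have := mem_antidiagonal.mp hp; omega), zero_mul]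
  · rw [hW _ h, mul_zero]

end EulerOperator

open TrivSqZeroExt

section DualBessel

open Nat

lemma H_succ (n : ℕ) : H (n + 1) = H n + 1 / (n + 1) := by
  simp [H, sum_range_succ]

noncomputable def dualBesselCoeff (s : ℝ) (j : ℕ) : DualNumber ℝ :=
  inl ((j ! : ℝ) ^ 2)⁻¹ - inr (2 * s * H j / (j ! : ℝ) ^ 2)

noncomputable def dualBessel (s : ℝ) : (DualNumber ℝ)⟦X⟧ :=
  mk (dualBesselCoeff s)

lemma succ_add_inr_sq_mul_dualBesselCoeff (s : ℝ) (i : ℕ) :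
    (((i + 1 : ℕ) : DualNumber ℝ) + inr s) ^ 2 * dualBesselCoeff s (i + 1) =
      dualBesselCoeff s i := by
  have hi : (i : ℝ) + 1 ≠ 0 := by positivity
  have hf : (i ! : ℝ) ≠ 0 := by positivity
  ext
  · simp only [dualBesselCoeff, fst_mul, fst_pow, fst_add, fst_natCast, fst_inr, fst_sub, fst_inl,
      add_zero, sub_zero, factorial_succ]
    push_cast
    field_simp
  · simp only [dualBesselCoeff, DualNumber.snd_mul, fst_pow, snd_pow, fst_add, snd_add,
      fst_natCast, snd_natCast, fst_inr, snd_inr, fst_sub, snd_sub, fst_inl, snd_inl, add_zero,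
      zero_add, sub_zero, zero_sub, smul_eq_mul, nsmul_eq_mul, pred_eq_sub_one, H_succ,
      factorial_succ]
    push_cast
    field_simp
    ring

lemma eulerOp_sq_dualBessel (s : ℝ) :
    eulerOp (inr s) (eulerOp (inr s) (dualBessel s)) = X * dualBessel s := by
  refine PowerSeries.ext fun j => ?_
  rcases j with _ | i
  · simp [← mul_assoc]
  · rw [coeff_succ_X_mul, coeff_eulerOp, coeff_eulerOp, ← mul_assoc, ← pow_two]
    simpa [dualBessel] using succ_add_inr_sq_mul_dualBesselCoeff s i

lemma snd_coeff_eulerOp_iterate_dualBessel_mul (s : ℝ) (m n : ℕ) :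
    snd (coeff n ((eulerOp (inr s))^[m] (dualBessel s) * dualBessel (-s))) =
      s * ∑ j ∈ range (n + 1),
        (m * (j : ℝ) ^ (m - 1) + 2 * j ^ m * (H (n - j) - H j)) /
          ((j ! : ℝ) ^ 2 * ((n - j) ! : ℝ) ^ 2) := by
  rw [coeff_mul, Nat.sum_antidiagonal_eq_sum_range_succ_mk, snd_sum, mul_sum]
  refine sum_congr rfl fun j _ => ?_
  simp only [coeff_eulerOp_iterate, dualBessel, coeff_mk, dualBesselCoeff, DualNumber.snd_mul,
    fst_mul, fst_pow, snd_pow, fst_add, snd_add, fst_natCast, snd_natCast, fst_inr, snd_inr,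
    fst_sub, snd_sub, fst_inl, snd_inl, add_zero, zero_add, sub_zero, smul_eq_mul, nsmul_eq_mul,
    pred_eq_sub_one]
  ring

theorem sum_harmonic_moment_eq_zero {m n : ℕ} (hm : m ≤ 2 * n) :
    ∑ j ∈ range (n + 1),
      (m * (j : ℝ) ^ (m - 1) + 2 * j ^ m * (H (n - j) - H j)) /
        ((j ! : ℝ) ^ 2 * ((n - j) ! : ℝ) ^ 2) = 0 := by
  have : IsAddTorsionFree (DualNumber ℝ) := .of_module_rat _
  have hB : eulerOp (-inr 1) (eulerOp (-inr 1) (dualBessel (-1))) = X * dualBessel (-1) := by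
    simpa [← inr_neg] using eulerOp_sq_dualBessel (-1)
  have h := congrArg snd (coeff_eulerOp_iterate_mul_comm (eulerOp_sq_dualBessel 1) hB hm)
  have h' := snd_coeff_eulerOp_iterate_dualBessel_mul (-1) m n
  rw [neg_neg] at h'
  rw [← inr_neg, snd_coeff_eulerOp_iterate_dualBessel_mul, h'] at h
  linarith

end DualBessel

section ExpTaylor

open Filter Topology

lemma isBigO_exp_sub_sum_range (N : ℕ) :
    (fun y : ℝ => Real.exp y - ∑ m ∈ range N, y ^ m / m.factorial) =O[𝓝 0] (· ^ N) := by
  have h := (NormedSpace.exp_hasFPowerSeriesAt_zero (𝕂 := ℝ) (𝔸 := ℝ)).isBigO_sub_partialSum_pow N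
  simp only [zero_add, ← Real.exp_eq_exp_ℝ, FormalMultilinearSeries.partialSum,
    NormedSpace.expSeries_apply_eq, smul_eq_mul, ← norm_pow, isBigO_norm_right] at h
  simpa [div_eq_inv_mul] using h

lemma isBigO_exp_mul_sub_sum_range (a : ℝ) (N : ℕ) :
    (fun x : ℝ => Real.exp (a * x) - ∑ m ∈ range N, (a * x) ^ m / m.factorial) =O[𝓝 0]
      (· ^ N) := by
  have ha : Tendsto (a * ·) (𝓝 (0 : ℝ)) (𝓝 0) := by
    simpa using (continuous_const_mul a).tendsto 0
  refine ((isBigO_exp_sub_sum_range N).comp_tendsto ha).trans ?_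
  simpa [Function.comp_def, mul_pow] using
    (isBigO_refl (· ^ N) (𝓝 (0 : ℝ))).const_mul_left (a ^ N)

lemma mul_sum_range_add_mul_sum_range (a b x : ℝ) (N : ℕ) :
    b * ∑ m ∈ range (N + 1), (a * x) ^ m / m.factorial +
        x * ∑ m ∈ range N, (a * x) ^ m / m.factorial =
      ∑ m ∈ range (N + 1), (a ^ m * b + m * a ^ (m - 1)) * x ^ m / m.factorial := by
  simp only [add_mul, add_div, sum_add_distrib, mul_sum]
  congr 1
  · exact sum_congr rfl fun m _ => by ring
  · rw [sum_range_succ']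
    simp only [CharP.cast_eq_zero, zero_mul, zero_div, add_zero, Nat.factorial_succ,
      Nat.add_sub_cancel]
    refine sum_congr rfl fun m _ => ?_
    have : (m.factorial : ℝ) ≠ 0 := by positivity
    push_cast
    field_simp
    ring

/-- `(a ^ m * b + m * a ^ (m - 1)) / m!` is the `m`-th Taylor coefficient of
`exp (a x) * (x + b)`. -/
theorem isBigO_sum_exp_mul_add {ι : Type*} (s : Finset ι) (w a b : ι → ℝ) (N : ℕ)
    (h : ∀ m ≤ N, ∑ j ∈ s, w j * (a j ^ m * b j + m * a j ^ (m - 1)) = 0) :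
    (fun x => ∑ j ∈ s, w j * (Real.exp (a j * x) * (x + b j))) =O[𝓝 0] (· ^ (N + 1)) := by
  set rem : ℕ → ℝ → ℝ → ℝ := fun N a x =>
    Real.exp (a * x) - ∑ m ∈ range N, (a * x) ^ m / m.factorial
  have hsplit (x : ℝ) : ∑ j ∈ s, w j * (Real.exp (a j * x) * (x + b j)) =
      ∑ j ∈ s, w j * (b j * rem (N + 1) (a j) x + x * rem N (a j) x) := by
    have htaylor : ∑ j ∈ s, w j * (b j * ∑ m ∈ range (N + 1), (a j * x) ^ m / m.factorial +
        x * ∑ m ∈ range N, (a j * x) ^ m / m.factorial) = 0 := by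
      simp_rw [mul_sum_range_add_mul_sum_range, mul_sum]
      rw [sum_comm]
      refine sum_eq_zero fun m hm => ?_
      calc _ = (∑ j ∈ s, w j * (a j ^ m * b j + m * a j ^ (m - 1))) *
              (x ^ m / m.factorial) := by
            rw [sum_mul]
            exact sum_congr rfl fun _ _ => by ring
        _ = 0 := by rw [h m (Nat.lt_succ_iff.mp (mem_range.mp hm)), zero_mul]
    rw [← sub_zero (∑ j ∈ s, _), ← htaylor, ← sum_sub_distrib]
    exact sum_congr rfl fun j _ => by ring
  simp_rw [hsplit]
  refine IsBigO.fun_sum fun j _ => IsBigO.const_mul_left (IsBigO.add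
    ((isBigO_exp_mul_sub_sum_range _ _).const_mul_left _) ?_) _
  simpa [pow_succ'] using
    (isBigO_refl (id : ℝ → ℝ) (𝓝 0)).mul (isBigO_exp_mul_sub_sum_range (a j) N)

end ExpTaylor

/-- For every nonnegative integer `n`, `E_n(x) = O(x^{2n+1})` as `x → 0`. -/
theorem stmt_1 (n : ℕ) : (fun x : ℝ => E n x) =O[nhds 0] (fun x : ℝ => x ^ (2 * n + 1)) := by
  set w : ℕ → ℝ := fun j => ((j.factorial : ℝ) ^ 2 * ((n - j).factorial : ℝ) ^ 2)⁻¹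
  have hE : (fun x => E n x) = fun x => ∑ j ∈ range (n + 1),
      w j * (Real.exp (2 * j * x) * (x + (H (n - j) - H j))) := by
    funext x
    exact sum_congr rfl fun j _ => by ring
  rw [hE]
  refine isBigO_sum_exp_mul_add _ w _ _ (2 * n) fun m hm => ?_
  have hrescale (j : ℕ) : 2 * (w j * ((2 * j) ^ m * (H (n - j) - H j) + m * (2 * j) ^ (m - 1))) =
      2 ^ m * ((m * (j : ℝ) ^ (m - 1) + 2 * j ^ m * (H (n - j) - H j)) /
        ((j.factorial : ℝ) ^ 2 * ((n - j).factorial : ℝ) ^ 2)) := by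
    rcases m with _ | m <;> simp only [w, Nat.add_sub_cancel] <;> ring
  rw [← mul_right_inj' (two_ne_zero' ℝ), mul_sum, mul_zero]
  simp_rw [hrescale]
  rw [← mul_sum, sum_harmonic_moment_eq_zero hm, mul_zero]
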